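/- Fix l ≥ 2, h ≤ l, and a correct key k* : Fin l → Bool. Then the minimum, over all incorrect keys k ≠ k*, of the number of l-bit words i such that exactly one of HD(i,k*) = h and HD(i,k) = h holds equals 2·(C(l,h) − M), where M is the maximum of C(x,x/2)·C(l−x,h−x/2) over even integers x with 2 ≤ x ≤ l, and binomial coefficients C(a,b) are 0 when b < 0 or b > a. -/

import Mathlib

/-- Hamming distance between `l`-bit words. -/
def HD {l : ℕ} (a b : Fin l → Bool) : ℕ :=
  (Finset.univ.filter (fun j => a j ≠ b j)).card

/-!
Identify a word `i` with the set `A` of positions where it differs from `k*`. If `S` is the set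
of a key `k`, with `d = #S = HD(k, k*)`, then `HD(i, k) = #(A ∆ S)`, so the words at distance
`h` from both keys are the `h`-sets `A` with `#(A ∩ S) = d / 2`: there are
`C(d, d/2) · C(l - d, h - d/2)` of them when `d` is even and none otherwise. The error count of
`k` is the size of the symmetric difference of two Hamming spheres of size `C(l, h)`, i.e.
`2 · (C(l, h) - that intersection)`, and it is minimised by the incorrect key whose distance
`d ≥ 1` maximises the intersection; every `d ≤ l` is the distance of some key.
-/

open Finset
open scoped symmDiff

lemma card_filter_xor_add_two_mul {α : Type*} (s : Finset α) (p q : α → Prop)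
    [DecidablePred p] [DecidablePred q] :
    #{a ∈ s | Xor (p a) (q a)} + 2 * #{a ∈ s | p a ∧ q a} = #{a ∈ s | p a} + #{a ∈ s | q a} := by
  simp only [card_filter, mul_sum, ← sum_add_distrib]
  refine sum_congr rfl fun a _ => ?_
  by_cases p a <;> by_cases q a <;> simp_all [Xor]

section Finsets

variable {ι : Type*} [DecidableEq ι]

lemma card_symmDiff_add_two_mul_card_inter (A S : Finset ι) :
    #(A ∆ S) + 2 * #(A ∩ S) = #A + #S := by
  have hA := card_sdiff_add_card_inter A S
  have hS := card_sdiff_add_card_inter S A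
  rw [symmDiff_def, sup_eq_union, card_union_of_disjoint disjoint_sdiff_sdiff]
  rw [inter_comm] at hS
  omega

variable [Fintype ι]

lemma union_inter_eq_and_union_sdiff_eq {B C S : Finset ι} (hB : B ⊆ S) (hC : C ⊆ Sᶜ) :
    (B ∪ C) ∩ S = B ∧ (B ∪ C) \ S = C := by
  constructor <;> ext a <;> simp only [mem_inter, mem_union, mem_sdiff] <;>
    have := @hB a <;> have := @hC a <;> simp only [mem_compl] at * <;> tauto

lemma card_filter_card_inter_card_sdiff (S : Finset ι) (r s : ℕ) :
    #{A : Finset ι | #(A ∩ S) = r ∧ #(A \ S) = s} = (#S).choose r * (#Sᶜ).choose s := by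
  rw [← card_powersetCard, ← card_powersetCard, ← card_product]
  refine card_nbij' (fun A => (A ∩ S, A \ S)) (fun p => p.1 ∪ p.2) ?_ ?_ ?_ ?_
  · intro A hA
    simp only [coe_filter, mem_univ, true_and] at hA
    simp only [coe_product, Set.mem_prod, mem_coe, mem_powersetCard]
    exact ⟨⟨inter_subset_right, hA.1⟩, fun a ha => mem_compl.2 (mem_sdiff.1 ha).2, hA.2⟩
  · rintro ⟨B, C⟩ hBC
    simp only [coe_product, Set.mem_prod, mem_coe, mem_powersetCard] at hBC
    obtain ⟨hinter, hsdiff⟩ := union_inter_eq_and_union_sdiff_eq hBC.1.1 hBC.2.1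
    simp [hinter, hsdiff, hBC.1.2, hBC.2.2]
  · intro A _
    exact sup_inf_sdiff A S
  · rintro ⟨B, C⟩ hBC
    simp only [coe_product, Set.mem_prod, mem_coe, mem_powersetCard] at hBC
    obtain ⟨hinter, hsdiff⟩ := union_inter_eq_and_union_sdiff_eq hBC.1.1 hBC.2.1
    simp [hinter, hsdiff]

end Finsets

/-- The number of words at distance `h` from each of two `n`-bit words at distance `d`. -/
def sphereInterCard (n h d : ℕ) : ℕ :=
  if Even d ∧ d / 2 ≤ h then d.choose (d / 2) * (n - d).choose (h - d / 2) else 0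

lemma sphereInterCard_of_even {n h d : ℕ} (hd : Even d) :
    sphereInterCard n h d = if d / 2 ≤ h then d.choose (d / 2) * (n - d).choose (h - d / 2)
      else 0 := by
  simp [sphereInterCard, hd]

lemma sphereInterCard_le_sup {n h d : ℕ} (hd : 1 ≤ d) (hdn : d ≤ n) :
    sphereInterCard n h d ≤ {x ∈ Icc 2 n | Even x}.sup fun x =>
      if x / 2 ≤ h then x.choose (x / 2) * (n - x).choose (h - x / 2) else 0 := by
  by_cases heven : Even d
  · rw [sphereInterCard_of_even heven]
    refine le_sup (f := fun x => if x / 2 ≤ h then x.choose (x / 2) * (n - x).choose (h - x / 2)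
      else 0) (mem_filter.2 ⟨mem_Icc.2 ⟨?_, hdn⟩, heven⟩)
    obtain ⟨r, rfl⟩ := heven
    omega
  · simp [sphereInterCard, heven]

lemma card_filter_card_eq_card_symmDiff_eq {ι : Type*} [Fintype ι] [DecidableEq ι]
    (S : Finset ι) (h : ℕ) :
    #{A : Finset ι | #A = h ∧ #(A ∆ S) = h} = sphereInterCard (Fintype.card ι) h #S := by
  unfold sphereInterCard
  split_ifs with hd
  · obtain ⟨⟨r, hr⟩, hrh⟩ := hd
    rw [← card_compl, ← card_filter_card_inter_card_sdiff]
    refine congrArg card (filter_congr fun A _ => ?_)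
    have := card_symmDiff_add_two_mul_card_inter A S
    have := card_inter_add_card_sdiff A S
    omega
  · refine card_eq_zero.2 (filter_eq_empty_iff.2 ?_)
    rintro A - ⟨hAh, hASh⟩
    have := card_symmDiff_add_two_mul_card_inter A S
    have := card_inter_add_card_sdiff A S
    exact hd ⟨⟨#(A ∩ S), by omega⟩, by omega⟩

section Words

variable {ι : Type*} [Fintype ι] [DecidableEq ι]

def diffEquiv (k : ι → Bool) : (ι → Bool) ≃ Finset ι where
  toFun i := {j | i j ≠ k j}
  invFun A j := if j ∈ A then !k j else k j
  left_inv i := by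
    funext j
    cases hi : i j <;> cases hk : k j <;> simp [hi, hk]
  right_inv A := by
    ext j
    by_cases hj : j ∈ A <;> simp [hj]

lemma hammingDist_eq_card_diffEquiv (i k : ι → Bool) : hammingDist i k = #(diffEquiv k i) := rfl

lemma diffEquiv_eq_symmDiff (k k' i : ι → Bool) :
    diffEquiv k' i = diffEquiv k i ∆ diffEquiv k k' := by
  ext j
  simp only [diffEquiv, Equiv.coe_fn_mk, mem_symmDiff, mem_filter, mem_univ, true_and]
  cases i j <;> cases k j <;> cases k' j <;> decide

lemma exists_hammingDist_eq (k : ι → Bool) {d : ℕ} (hd : d ≤ Fintype.card ι) :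
    ∃ k' : ι → Bool, hammingDist k' k = d := by
  obtain ⟨A, -, hA⟩ := exists_subset_card_eq (s := univ) hd
  exact ⟨(diffEquiv k).symm A, by rw [hammingDist_eq_card_diffEquiv, Equiv.apply_symm_apply, hA]⟩

lemma card_filter_hammingDist_eq (k : ι → Bool) (h : ℕ) :
    #{i | hammingDist i k = h} = (Fintype.card ι).choose h := calc
  #{i | hammingDist i k = h} = #(powersetCard h univ) :=
    card_equiv (diffEquiv k) fun i => by
      simp only [mem_filter, mem_univ, true_and, mem_powersetCard_univ]; rfl
  _ = _ := by rw [card_powersetCard, card_univ]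

lemma card_filter_hammingDist_eq_and_hammingDist_eq (kstar k : ι → Bool) (h : ℕ) :
    #{i | hammingDist i kstar = h ∧ hammingDist i k = h}
      = sphereInterCard (Fintype.card ι) h (hammingDist k kstar) := calc
  _ = #{A : Finset ι | #A = h ∧ #(A ∆ diffEquiv kstar k) = h} :=
    card_equiv (diffEquiv kstar) fun i => by
      simp only [mem_filter, mem_univ, true_and, hammingDist_eq_card_diffEquiv,
        diffEquiv_eq_symmDiff kstar k]
  _ = _ := card_filter_card_eq_card_symmDiff_eq _ h

lemma card_filter_xor_hammingDist_eq (kstar k : ι → Bool) (h : ℕ) :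
    #{i | Xor (hammingDist i kstar = h) (hammingDist i k = h)}
      = 2 * ((Fintype.card ι).choose h
          - sphereInterCard (Fintype.card ι) h (hammingDist k kstar)) := by
  have := card_filter_xor_add_two_mul univ (hammingDist · kstar = h) (hammingDist · k = h)
  rw [card_filter_hammingDist_eq, card_filter_hammingDist_eq,
    card_filter_hammingDist_eq_and_hammingDist_eq] at this
  omega

end Words

theorem sfll_hd_min_per_key_error_general {l : ℕ} (hl : 2 ≤ l) (h : ℕ)
    (kstar : Fin l → Bool) :
    IsLeast {c : ℕ | ∃ k : Fin l → Bool, k ≠ kstar ∧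
        c = (Finset.univ.filter (fun i : Fin l → Bool =>
          Xor (HD i kstar = h) (HD i k = h))).card}
      (2 * (l.choose h -
        ((Finset.Icc 2 l).filter (fun x => Even x)).sup
          (fun x => if x / 2 ≤ h then x.choose (x / 2) * (l - x).choose (h - x / 2)
                    else 0))) := by
  have herr (k : Fin l → Bool) : #{i | Xor (HD i kstar = h) (HD i k = h)}
      = 2 * (l.choose h - sphereInterCard l h (hammingDist k kstar)) := by
    have := card_filter_xor_hammingDist_eq kstar k h
    rwa [Fintype.card_fin] at this
  obtain ⟨x, hx, hmax⟩ := exists_mem_eq_sup {x ∈ Icc 2 l | Even x}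
    ⟨2, mem_filter.2 ⟨mem_Icc.2 ⟨le_rfl, hl⟩, even_two⟩⟩
    fun x => if x / 2 ≤ h then x.choose (x / 2) * (l - x).choose (h - x / 2) else 0
  simp only [mem_filter, mem_Icc] at hx
  obtain ⟨⟨hx2, hxl⟩, hxeven⟩ := hx
  refine ⟨?_, ?_⟩
  · obtain ⟨k, hk⟩ := exists_hammingDist_eq kstar (d := x) (by simpa using hxl)
    refine ⟨k, hammingDist_pos.1 (by omega), ?_⟩
    rw [herr, hk, hmax, sphereInterCard_of_even hxeven]
  · rintro _ ⟨k, hk, rfl⟩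
    have := sphereInterCard_le_sup (h := h) (hammingDist_pos.2 hk)
      (hammingDist_le_card_fintype.trans_eq (Fintype.card_fin l))
    rw [herr]
    omega

/-- SFLL-HD minimum per-key error count: the minimum, over incorrect keys `k ≠ k*`,
of the number of words `i` on which exactly one of `HD(i,k*) = h`, `HD(i,k) = h`
holds, equals `2·(C(l,h) − M)` where `M` is the maximum of
`C(x,x/2)·C(l−x,h−x/2)` over even `x` with `2 ≤ x ≤ l` (binomial coefficients
being `0` for negative lower index, via the `if` guard). -/
theorem sfll_hd_min_per_key_error {l : ℕ} (hl : 2 ≤ l) (h : ℕ) (hh : h ≤ l)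
    (kstar : Fin l → Bool) :
    IsLeast {c : ℕ | ∃ k : Fin l → Bool, k ≠ kstar ∧
        c = (Finset.univ.filter (fun i : Fin l → Bool =>
          Xor (HD i kstar = h) (HD i k = h))).card}
      (2 * (l.choose h -
        ((Finset.Icc 2 l).filter (fun x => Even x)).sup
          (fun x => if x / 2 ≤ h then x.choose (x / 2) * (l - x).choose (h - x / 2)
                    else 0))) :=
  sfll_hd_min_per_key_error_general hl h kstar
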